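/- For every codeword χ ∈ S^♮ of Hamming weight 24, the subcode (D^♮)_χ = {μ ∈ D^♮ : Supp(μ) ⊆ Supp(χ)} has dimension 18 (hence exactly 2^18 elements). -/
import Mathlib


/-- The all-ones word `(1^16)`. -/
def w16All : Fin 16 → ZMod 2 := fun _ => 1

/-- The word `(0^8 1^8)`. -/
def w16Half : Fin 16 → ZMod 2 := fun i => if 8 ≤ i.val then 1 else 0

/-- The word `(0^4 1^4 0^4 1^4)`. -/
def w16Quarter : Fin 16 → ZMod 2 := fun i => if 4 ≤ i.val % 8 then 1 else 0

/-- The word `(0^2 1^2)` repeated 4 times. -/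
def w16Eighth : Fin 16 → ZMod 2 := fun i => if 2 ≤ i.val % 4 then 1 else 0

/-- The word `(01)` repeated 8 times. -/
def w16Alt : Fin 16 → ZMod 2 := fun i => if 1 ≤ i.val % 2 then 1 else 0

/-- The code `S_{E8}`: the binary linear code of length 16 spanned by
`(1^16)`, `(0^8 1^8)`, `(0^4 1^4 0^4 1^4)`, `((0^2 1^2)^4)` and `((01)^8)`. -/
def SE8 : Submodule (ZMod 2) (Fin 16 → ZMod 2) :=
  Submodule.span (ZMod 2) {w16All, w16Half, w16Quarter, w16Eighth, w16Alt}

/-- The word of length 48 which is `1` exactly on the `b`-th block of 16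
coordinates (so `blockOnes 0 = (1^16,0^16,0^16)` etc.). -/
def blockOnes (b : ℕ) : Fin 48 → ZMod 2 := fun j => if j.val / 16 = b then 1 else 0

/-- The length-48 word `(α, α, α)` repeating a length-16 word `α` on each of the
three blocks. -/
def tripleRep (α : Fin 16 → ZMod 2) : Fin 48 → ZMod 2 :=
  fun j => α ⟨j.val % 16, Nat.mod_lt _ (by norm_num)⟩

/-- The moonshine code `S^♮`: the binary linear code of length 48 spanned by
`(1^16,0^16,0^16)`, `(0^16,1^16,0^16)`, `(0^16,0^16,1^16)` and all `(α,α,α)`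
with `α ∈ S_{E8}`. -/
def Snat : Submodule (ZMod 2) (Fin 48 → ZMod 2) :=
  Submodule.span (ZMod 2)
    ({blockOnes 0, blockOnes 1, blockOnes 2} ∪ {w | ∃ α ∈ SE8, w = tripleRep α})


/-- The dual code `C^⊥ = {γ : Σ_i γ_i α_i = 0 for all α ∈ C}` of a binary code `C`
of length `n`. -/
def dualCode {n : ℕ} (C : Set (Fin n → ZMod 2)) : Submodule (ZMod 2) (Fin n → ZMod 2) where
  carrier := {c | ∀ a ∈ C, ∑ i, c i * a i = 0}
  add_mem' := by
    intro x y hx hy a ha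
    have hx' := hx a ha
    have hy' := hy a ha
    simp only [Set.mem_setOf_eq, Pi.add_apply, add_mul, Finset.sum_add_distrib, hx', hy',
      add_zero]
  zero_mem' := by
    intro a ha
    simp
  smul_mem' := by
    intro m x hx a ha
    have hx' := hx a ha
    calc ∑ i, (m • x) i * a i = m * ∑ i, x i * a i := by
          simp [Finset.mul_sum, mul_assoc]
      _ = 0 := by rw [hx', mul_zero]

/-- The moonshine code `D^♮ = (S^♮)^⊥`. -/
def Dnat : Submodule (ZMod 2) (Fin 48 → ZMod 2) :=
  dualCode (Snat : Set (Fin 48 → ZMod 2))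

/-- The subcode `D_χ = {μ ∈ D : Supp(μ) ⊆ Supp(χ)}` of the codewords of `D`
supported on the support of `χ`. -/
def supportedSubcode (D : Submodule (ZMod 2) (Fin 48 → ZMod 2))
    (χ : Fin 48 → ZMod 2) : Submodule (ZMod 2) (Fin 48 → ZMod 2) where
  carrier := {μ | μ ∈ D ∧ ∀ j, μ j ≠ 0 → χ j ≠ 0}
  add_mem' := by
    intro x y hx hy
    refine ⟨D.add_mem hx.1 hy.1, fun j hj hχ => hj ?_⟩
    have hxj : x j = 0 := not_not.mp fun h => hx.2 j h hχ
    have hyj : y j = 0 := not_not.mp fun h => hy.2 j h hχ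
    simp [hxj, hyj]
  zero_mem' := by
    refine ⟨D.zero_mem, fun j hj => ?_⟩
    simp at hj
  smul_mem' := by
    intro m x hx
    refine ⟨D.smul_mem m hx.1, fun j hj => ?_⟩
    refine hx.2 j fun h => hj ?_
    simp [h]

-- auxiliary
def gen : Fin 7 → Fin 48 → ZMod 2 :=
  ![blockOnes 0, blockOnes 1, blockOnes 2, tripleRep w16Half, tripleRep w16Quarter,
    tripleRep w16Eighth, tripleRep w16Alt]

def mk2 (b : ZMod 2) (n : ℕ) : ℕ := if b = 1 then n else 0

def comboN7 (c0 c1 c2 c3 c4 c5 c6 : ZMod 2) : ℕ :=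
  mk2 c0 65535 ^^^ mk2 c1 4294901760 ^^^ mk2 c2 281470681743360 ^^^ mk2 c3 280379743338240 ^^^
  mk2 c4 264917625139440 ^^^ mk2 c5 225179981368524 ^^^ mk2 c6 187649984473770

def ntw (n : ℕ) (j : Fin 48) : ZMod 2 := if n.testBit j.val then 1 else 0

lemma ntw_xor (a b : ℕ) (j : Fin 48) : ntw (a ^^^ b) j = ntw a j + ntw b j := by
  unfold ntw
  rw [Nat.testBit_xor]
  cases ha : a.testBit j.val <;> cases hb : b.testBit j.val <;> decide

lemma zmod2_cases (b : ZMod 2) : b = 0 ∨ b = 1 := by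
  revert b; decide

lemma mk2_ntw (b : ZMod 2) (n : ℕ) (j : Fin 48) : b * ntw n j = ntw (mk2 b n) j := by
  rcases zmod2_cases b with rfl | rfl
  · simp [mk2, ntw, Nat.zero_testBit]
  · simp [mk2, ntw]

lemma genBit (j : Fin 48) :
    gen 0 j = ntw 65535 j ∧ gen 1 j = ntw 4294901760 j ∧ gen 2 j = ntw 281470681743360 j ∧
    gen 3 j = ntw 280379743338240 j ∧ gen 4 j = ntw 264917625139440 j ∧
    gen 5 j = ntw 225179981368524 j ∧ gen 6 j = ntw 187649984473770 j := by
  revert j; decide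

lemma combo_bridge (c : Fin 7 → ZMod 2) (j : Fin 48) :
    ∑ i, c i * gen i j = ntw (comboN7 (c 0) (c 1) (c 2) (c 3) (c 4) (c 5) (c 6)) j := by
  rw [Fin.sum_univ_seven, (genBit j).1, (genBit j).2.1, (genBit j).2.2.1, (genBit j).2.2.2.1,
    (genBit j).2.2.2.2.1, (genBit j).2.2.2.2.2.1, (genBit j).2.2.2.2.2.2]
  simp only [mk2_ntw, ← ntw_xor]
  rfl
-- Part 2: span and dual characterizations, key decide lemmas
section MoonshineAux

lemma tripleRep_add (a b : Fin 16 → ZMod 2) : tripleRep (a + b) = tripleRep a + tripleRep b := rfl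

lemma tripleRep_smul (r : ZMod 2) (a : Fin 16 → ZMod 2) :
    tripleRep (r • a) = r • tripleRep a := rfl

lemma tripleRep_all : tripleRep w16All = gen 0 + gen 1 + gen 2 := by decide

lemma SnatEq : Snat = Submodule.span (ZMod 2) (Set.range gen) := by
  apply le_antisymm
  · rw [Snat, Submodule.span_le]
    rintro w (hw | ⟨α, hα, rfl⟩)
    · rcases hw with rfl | rfl | rfl
      · exact Submodule.subset_span ⟨0, rfl⟩
      · exact Submodule.subset_span ⟨1, rfl⟩
      · exact Submodule.subset_span ⟨2, rfl⟩
    · induction hα using Submodule.span_induction with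
      | mem x hx =>
        rcases hx with rfl | rfl | rfl | rfl | rfl
        · rw [tripleRep_all]
          exact Submodule.add_mem _ (Submodule.add_mem _
            (Submodule.subset_span ⟨0, rfl⟩) (Submodule.subset_span ⟨1, rfl⟩))
            (Submodule.subset_span ⟨2, rfl⟩)
        · exact Submodule.subset_span ⟨3, rfl⟩
        · exact Submodule.subset_span ⟨4, rfl⟩
        · exact Submodule.subset_span ⟨5, rfl⟩
        · exact Submodule.subset_span ⟨6, rfl⟩
      | zero => exact Submodule.zero_mem _
      | add x y hx hy ihx ihy => rw [tripleRep_add]; exact Submodule.add_mem _ ihx ihy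
      | smul r x hx ihx => rw [tripleRep_smul]; exact Submodule.smul_mem _ _ ihx
  · rw [Submodule.span_le]
    rintro w ⟨i, rfl⟩
    fin_cases i
    · exact Submodule.subset_span (Or.inl (Or.inl rfl))
    · exact Submodule.subset_span (Or.inl (Or.inr (Or.inl rfl)))
    · exact Submodule.subset_span (Or.inl (Or.inr (Or.inr rfl)))
    · exact Submodule.subset_span (Or.inr ⟨w16Half, Submodule.subset_span (by simp), rfl⟩)
    · exact Submodule.subset_span (Or.inr ⟨w16Quarter, Submodule.subset_span (by simp), rfl⟩)
    · exact Submodule.subset_span (Or.inr ⟨w16Eighth, Submodule.subset_span (by simp), rfl⟩)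
    · exact Submodule.subset_span (Or.inr ⟨w16Alt, Submodule.subset_span (by simp), rfl⟩)

lemma mem_dualCode {n : ℕ} (C : Set (Fin n → ZMod 2)) (μ : Fin n → ZMod 2) :
    μ ∈ dualCode C ↔ ∀ a ∈ C, ∑ i, μ i * a i = 0 := Iff.rfl

lemma memDnat_iff (μ : Fin 48 → ZMod 2) :
    μ ∈ Dnat ↔ ∀ i : Fin 7, ∑ j, μ j * gen i j = 0 := by
  rw [Dnat, mem_dualCode]
  constructor
  · intro h i
    exact h (gen i) (by rw [SnatEq]; exact Submodule.subset_span ⟨i, rfl⟩)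
  · intro h a ha
    have ha2 : a ∈ Snat := ha
    rw [SnatEq] at ha2
    clear ha
    induction ha2 using Submodule.span_induction with
    | mem x hx => obtain ⟨i, rfl⟩ := hx; exact h i
    | zero => simp
    | add x y hx hy ihx ihy => simp [mul_add, Finset.sum_add_distrib, ihx, ihy]
    | smul r x hx ihx =>
      simp only [Pi.smul_apply, smul_eq_mul, mul_left_comm, ← Finset.mul_sum, ihx, mul_zero]

end MoonshineAux
section BitLemmas

lemma mk2_testBit_high (b : ZMod 2) (n j : ℕ) (hn : n < 2 ^ 48) (hj : 48 ≤ j) :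
    (mk2 b n).testBit j = false := by
  unfold mk2
  split
  · exact Nat.testBit_eq_false_of_lt (hn.trans_le (Nat.pow_le_pow_right (by norm_num) hj))
  · exact Nat.zero_testBit j

lemma comboN7_testBit_high (c0 c1 c2 c3 c4 c5 c6 : ZMod 2) (j : ℕ) (hj : 48 ≤ j) :
    (comboN7 c0 c1 c2 c3 c4 c5 c6).testBit j = false := by
  unfold comboN7
  simp only [Nat.testBit_xor]
  rw [mk2_testBit_high c0 _ _ (by norm_num) hj, mk2_testBit_high c1 _ _ (by norm_num) hj,
    mk2_testBit_high c2 _ _ (by norm_num) hj, mk2_testBit_high c3 _ _ (by norm_num) hj,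
    mk2_testBit_high c4 _ _ (by norm_num) hj, mk2_testBit_high c5 _ _ (by norm_num) hj,
    mk2_testBit_high c6 _ _ (by norm_num) hj]
  rfl

lemma land_eq_zero_iff (m n : ℕ) (hm : ∀ j, 48 ≤ j → m.testBit j = false) :
    m &&& n = 0 ↔ ∀ j : Fin 48, n.testBit j.val → m.testBit j.val = false := by
  constructor
  · intro h j hn
    have h2 : (m &&& n).testBit j.val = false := by rw [h]; exact Nat.zero_testBit _
    rw [Nat.testBit_land, hn, Bool.and_true] at h2
    exact h2
  · intro h
    apply Nat.eq_of_testBit_eq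
    intro j
    rw [Nat.testBit_land, Nat.zero_testBit]
    by_cases hj : j < 48
    · cases hmb : m.testBit j
      · rfl
      · cases hnb : n.testBit j
        · rfl
        · have := h ⟨j, hj⟩ hnb
          rw [hmb] at this
          exact absurd this (by simp)
    · rw [hm j (le_of_not_gt hj)]; rfl

lemma ntw_eq_zero (n : ℕ) (j : Fin 48) : ntw n j = 0 ↔ n.testBit j.val = false := by
  unfold ntw
  split <;> rename_i h <;> simp [h, (show (1 : ZMod 2) ≠ 0 by decide)]

lemma zmod2_add_cancel : ∀ a b : ZMod 2, a + b = 0 → a = b := by decide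

set_option maxRecDepth 1000000 in
set_option maxHeartbeats 16000000 in
set_option synthInstance.maxHeartbeats 2000000 in
set_option synthInstance.maxSize 2000 in
theorem key : ∀ d0 d1 d2 d3 d4 d5 d6 : ZMod 2,
    (Finset.univ.filter (fun j : Fin 48 => (comboN7 d0 d1 d2 d3 d4 d5 d6).testBit j.val)).card = 24 →
    ∀ c0 c1 c2 c3 c4 c5 c6 : ZMod 2,
    ((comboN7 c0 c1 c2 c3 c4 c5 c6) &&& (comboN7 d0 d1 d2 d3 d4 d5 d6) = 0 ↔
      ((c0 = 0 ∧ c1 = 0 ∧ c2 = 0 ∧ c3 = 0 ∧ c4 = 0 ∧ c5 = 0 ∧ c6 = 0) ∨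
       (c0 = d0 + 1 ∧ c1 = d1 + 1 ∧ c2 = d2 + 1 ∧ c3 = d3 ∧ c4 = d4 ∧ c5 = d5 ∧ c6 = d6))) := by
  decide

set_option maxRecDepth 1000000 in
set_option maxHeartbeats 16000000 in
set_option synthInstance.maxHeartbeats 2000000 in
set_option synthInstance.maxSize 2000 in
theorem key2 : ∀ d0 d1 d2 d3 d4 d5 d6 : ZMod 2,
    (Finset.univ.filter (fun j : Fin 48 => (comboN7 d0 d1 d2 d3 d4 d5 d6).testBit j.val)).card = 24 →
    ¬(d0 = 1 ∧ d1 = 1 ∧ d2 = 1 ∧ d3 = 0 ∧ d4 = 0 ∧ d5 = 0 ∧ d6 = 0) := by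
  decide

lemma mem_supportedSubcode (D : Submodule (ZMod 2) (Fin 48 → ZMod 2)) (χ μ : Fin 48 → ZMod 2) :
    μ ∈ supportedSubcode D χ ↔ μ ∈ D ∧ ∀ j, μ j ≠ 0 → χ j ≠ 0 := Iff.rfl

lemma fun7_ext_iff (c c' : Fin 7 → ZMod 2) :
    c = c' ↔ (c 0 = c' 0 ∧ c 1 = c' 1 ∧ c 2 = c' 2 ∧ c 3 = c' 3 ∧ c 4 = c' 4 ∧ c 5 = c' 5 ∧
      c 6 = c' 6) := by
  constructor
  · intro h; subst h; exact ⟨rfl, rfl, rfl, rfl, rfl, rfl, rfl⟩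
  · rintro ⟨h0, h1, h2, h3, h4, h5, h6⟩
    funext i
    fin_cases i <;> assumption

end BitLemmas
open Matrix

/-- For every codeword `χ ∈ S^♮` of Hamming weight 24, the subcode
`(D^♮)_χ = {μ ∈ D^♮ : Supp(μ) ⊆ Supp(χ)}` has dimension 18, hence exactly
`2^18` elements. -/
theorem Dnat_supported_subcode_dim (χ : Fin 48 → ZMod 2) (hχ : χ ∈ Snat)
    (hwt : hammingNorm χ = 24) :
    Module.finrank (ZMod 2) (supportedSubcode Dnat χ) = 18 ∧
    Nat.card (supportedSubcode Dnat χ) = 2 ^ 18 := by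
  classical
  haveI : Fact (Nat.Prime 2) := ⟨Nat.prime_two⟩
  rw [SnatEq, Submodule.mem_span_range_iff_exists_fun] at hχ
  obtain ⟨d, hd⟩ := hχ
  set D : ℕ := comboN7 (d 0) (d 1) (d 2) (d 3) (d 4) (d 5) (d 6) with hD
  have hχj : ∀ j, χ j = ntw D j := by
    intro j
    rw [← hd, Finset.sum_apply]
    simp only [Pi.smul_apply, smul_eq_mul]
    exact combo_bridge d j
  have hsupp : ∀ j : Fin 48, χ j ≠ 0 ↔ D.testBit j.val := by
    intro j
    rw [hχj j]
    unfold ntw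
    by_cases h : D.testBit j.val <;> simp [h]
  have hwt0 : (Finset.univ.filter (fun j : Fin 48 => χ j ≠ 0)).card = 24 := hwt
  have hwt' : (Finset.univ.filter (fun j : Fin 48 => D.testBit j.val)).card = 24 := by
    have hfe : (Finset.univ.filter (fun j : Fin 48 => D.testBit j.val))
        = Finset.univ.filter (fun j => χ j ≠ 0) :=
      Finset.filter_congr (fun j _ => by simp [hsupp j])
    rw [hfe]
    exact hwt0
  have hkey := key (d 0) (d 1) (d 2) (d 3) (d 4) (d 5) (d 6) hwt'
  have hkey2 := key2 (d 0) (d 1) (d 2) (d 3) (d 4) (d 5) (d 6) hwt'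
  set dbar : Fin 7 → ZMod 2 := d + ![1, 1, 1, 0, 0, 0, 0] with hdbar
  have hdbar_ne : dbar ≠ 0 := by
    intro h0
    have h' : ∀ i, d i + ![(1 : ZMod 2), 1, 1, 0, 0, 0, 0] i = 0 := fun i => congrFun h0 i
    exact hkey2 ⟨zmod2_add_cancel _ _ (h' 0), zmod2_add_cancel _ _ (h' 1),
      zmod2_add_cancel _ _ (h' 2), zmod2_add_cancel _ _ (h' 3), zmod2_add_cancel _ _ (h' 4),
      zmod2_add_cancel _ _ (h' 5), zmod2_add_cancel _ _ (h' 6)⟩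
  -- the support subtype and the generator matrix restricted to it
  set A : Matrix (Fin 7) {j : Fin 48 // χ j ≠ 0} (ZMod 2) :=
    Matrix.of fun i j => gen i j.1 with hA
  have hcardS : Fintype.card {j : Fin 48 // χ j ≠ 0} = 24 := by
    rw [Fintype.card_subtype]
    exact hwt0
  -- restriction of sums to the support
  have hsum : ∀ (μ w : Fin 48 → ZMod 2), (∀ j, μ j ≠ 0 → χ j ≠ 0) →
      ∑ j : {j : Fin 48 // χ j ≠ 0}, μ j.1 * w j.1 = ∑ j, μ j * w j := by
    intro μ w hμ
    rw [← Finset.sum_subtype (Finset.univ.filter (fun j => χ j ≠ 0))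
        (fun j => by simp) (fun j => μ j * w j)]
    apply Finset.sum_subset (Finset.filter_subset _ _)
    intro j _ hj
    simp only [Finset.mem_filter, Finset.mem_univ, true_and, not_not] at hj
    have hμj : μ j = 0 := by
      by_contra hmm
      exact (hμ j hmm) hj
    rw [hμj, zero_mul]
  have hAmul : ∀ (v : {j : Fin 48 // χ j ≠ 0} → ZMod 2) (i : Fin 7),
      A.mulVecLin v i = ∑ j : {j : Fin 48 // χ j ≠ 0}, v j * gen i j.1 := by
    intro v i
    simp [Matrix.mulVecLin_apply, Matrix.mulVec, dotProduct, hA, mul_comm]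
  have hATmul : ∀ (c : Fin 7 → ZMod 2) (j : {j : Fin 48 // χ j ≠ 0}),
      Aᵀ.mulVecLin c j = ∑ i, c i * gen i j.1 := by
    intro c j
    simp [Matrix.mulVecLin_apply, Matrix.mulVec, Matrix.vecMul, dotProduct,
      Matrix.transpose_apply, Matrix.of_apply, hA, mul_comm]
  -- the subcode is equivalent to the kernel of `A.mulVecLin`
  have keyEquiv : (supportedSubcode Dnat χ) ≃ₗ[ZMod 2] LinearMap.ker A.mulVecLin := by
    refine
      { toFun := fun μ => ⟨fun j => μ.1 j.1, ?_⟩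
        map_add' := fun μ ν => rfl
        map_smul' := fun r μ => rfl
        invFun := fun v => ⟨fun j => if h : χ j ≠ 0 then v.1 ⟨j, h⟩ else 0, ?_⟩
        left_inv := ?_
        right_inv := ?_ }
    · -- restriction lands in the kernel
      rw [LinearMap.mem_ker]
      funext i
      rw [hAmul]
      rw [hsum μ.1 (gen i) μ.2.2]
      exact (memDnat_iff μ.1).mp μ.2.1 i
    · -- extension by zero lands in the subcode
      refine ⟨?_, fun j hj => ?_⟩
      · rw [memDnat_iff]
        intro i
        have hs : ∀ j, (if h : χ j ≠ 0 then v.1 ⟨j, h⟩ else 0) ≠ 0 → χ j ≠ 0 := by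
          intro j hj
          by_contra hc
          simp only [dif_neg (not_not_intro hc)] at hj
          exact hj rfl
        rw [← hsum _ (gen i) hs]
        have : ∀ j : {j : Fin 48 // χ j ≠ 0},
            (if h : χ j.1 ≠ 0 then v.1 ⟨j.1, h⟩ else 0) = v.1 j := by
          intro j
          rw [dif_pos j.2]
        rw [Finset.sum_congr rfl (fun j _ => by rw [this j])]
        have hv := v.2
        rw [LinearMap.mem_ker] at hv
        have := congrFun hv i
        rw [hAmul] at this
        exact this
      · by_contra hc
        simp only [dif_neg (not_not_intro hc)] at hj
        exact hj rfl
    · intro μ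
      apply Subtype.ext
      funext j
      dsimp only
      split
      · rfl
      · rename_i hc
        by_contra hne
        exact hc (μ.2.2 j (fun h => hne h.symm))
    · intro v
      apply Subtype.ext
      funext j
      exact dif_pos j.2
  have e1 : Module.finrank (ZMod 2) (supportedSubcode Dnat χ)
      = Module.finrank (ZMod 2) (LinearMap.ker A.mulVecLin) := keyEquiv.finrank_eq
  -- kernel of the transposed matrix is spanned by `dbar`
  have hkerT : LinearMap.ker (Aᵀ.mulVecLin) = Submodule.span (ZMod 2) {dbar} := by
    ext c
    rw [LinearMap.mem_ker, Submodule.mem_span_singleton]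
    have hCD : Aᵀ.mulVecLin c = 0 ↔
        comboN7 (c 0) (c 1) (c 2) (c 3) (c 4) (c 5) (c 6) &&& D = 0 := by
      rw [land_eq_zero_iff _ _ (fun j hj => comboN7_testBit_high _ _ _ _ _ _ _ j hj)]
      rw [funext_iff]
      constructor
      · intro h j hj
        have h2 := h ⟨j, (hsupp j).mpr hj⟩
        rw [hATmul, combo_bridge] at h2
        exact (ntw_eq_zero _ _).mp h2
      · intro h j
        rw [hATmul, combo_bridge, Pi.zero_apply, ntw_eq_zero]
        exact h ⟨j.1.val, j.1.isLt⟩ ((hsupp j.1).mp j.2)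
    rw [hCD, hkey (c 0) (c 1) (c 2) (c 3) (c 4) (c 5) (c 6)]
    have hor : ((c 0 = 0 ∧ c 1 = 0 ∧ c 2 = 0 ∧ c 3 = 0 ∧ c 4 = 0 ∧ c 5 = 0 ∧ c 6 = 0) ∨
        (c 0 = d 0 + 1 ∧ c 1 = d 1 + 1 ∧ c 2 = d 2 + 1 ∧ c 3 = d 3 ∧ c 4 = d 4 ∧ c 5 = d 5 ∧
          c 6 = d 6)) ↔ (c = 0 ∨ c = dbar) := by
      rw [fun7_ext_iff c 0, fun7_ext_iff c dbar]
      simp only [hdbar, Pi.zero_apply, Pi.add_apply,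
        show ![(1 : ZMod 2), 1, 1, 0, 0, 0, 0] 0 = 1 from rfl,
        show ![(1 : ZMod 2), 1, 1, 0, 0, 0, 0] 1 = 1 from rfl,
        show ![(1 : ZMod 2), 1, 1, 0, 0, 0, 0] 2 = 1 from rfl,
        show ![(1 : ZMod 2), 1, 1, 0, 0, 0, 0] 3 = 0 from rfl,
        show ![(1 : ZMod 2), 1, 1, 0, 0, 0, 0] 4 = 0 from rfl,
        show ![(1 : ZMod 2), 1, 1, 0, 0, 0, 0] 5 = 0 from rfl,
        show ![(1 : ZMod 2), 1, 1, 0, 0, 0, 0] 6 = 0 from rfl, add_zero]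
    rw [hor]
    constructor
    · rintro (rfl | rfl)
      · exact ⟨0, zero_smul _ _⟩
      · exact ⟨1, one_smul _ _⟩
    · rintro ⟨a, rfl⟩
      rcases zmod2_cases a with rfl | rfl
      · left; rw [zero_smul]
      · right; rw [one_smul]
  have r1 : Module.finrank (ZMod 2) (LinearMap.ker (Aᵀ.mulVecLin)) = 1 := by
    rw [hkerT]
    exact finrank_span_singleton hdbar_ne
  have r2 := LinearMap.finrank_range_add_finrank_ker (Aᵀ.mulVecLin)
  rw [r1, Module.finrank_pi, Fintype.card_fin] at r2
  have hrT : Module.finrank (ZMod 2) (LinearMap.range (Aᵀ.mulVecLin)) = 6 := by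
    omega
  have hrA : Module.finrank (ZMod 2) (LinearMap.range (A.mulVecLin)) = 6 := by
    have h1 : Aᵀ.rank = A.rank := Matrix.rank_transpose A
    rw [Matrix.rank, Matrix.rank] at h1
    rw [← h1]
    exact hrT
  have r3 := LinearMap.finrank_range_add_finrank_ker (A.mulVecLin)
  rw [hrA, Module.finrank_pi, hcardS] at r3
  have hfr : Module.finrank (ZMod 2) (supportedSubcode Dnat χ) = 18 := by
    rw [e1]; omega
  refine ⟨hfr, ?_⟩
  haveI : Fintype (supportedSubcode Dnat χ) := Fintype.ofFinite _
  rw [Nat.card_eq_fintype_card, Module.card_eq_pow_finrank (K := ZMod 2), ZMod.card, hfr]
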